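/- Let V be a finite set with |V| = n ≥ 2, and let L and L' be symmetric generators of irreducible, transitive continuous-time Markov chains on V (so L = Lᵀ, L(x,y) ≥ 0 for x ≠ y, rows sum to 0, and for all x,y ∈ V there is a bijection φ of V with φ(x) = y and L(a,b) = L(φ(a),φ(b)) for all a,b; similarly for L'). The common stationary distribution is uniform on V. Suppose for some c ∈ (0,1] that c·E'(f,f) ≤ E(f,f) ≤ E'(f,f)/c for all f : V → ℝ, where E(f,f) := (1/(2n))·∑_{u,v} L(u,v)(f(u) − f(v))² and E' is defined analogously with L'. Then the L² mixing times mix⁽²⁾ := inf{t ≥ 0 : max_x (n·∑_y (P_t(x,y) − 1/n)²)^{1/2} ≤ 1/2} (with P_t = exp(tL)) and mix⁽²⁾' (defined analogously with L') satisfy c·mix⁽²⁾ ≤ mix⁽²⁾' ≤ mix⁽²⁾/c. In particular, for transitive chains the L² mixing time is robust under bounded perturbations preserving transitivity. -/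

import Mathlib

open Finset

variable {V : Type*} [Fintype V] [DecidableEq V]

/-- `L` is the generator of a continuous-time Markov chain: nonnegative off-diagonal
entries and rows summing to zero. -/
def IsGenerator (L : Matrix V V ℝ) : Prop :=
  (∀ x y, x ≠ y → 0 ≤ L x y) ∧ (∀ x, ∑ y, L x y = 0)

/-- Irreducibility of the chain with generator `L`: the directed graph of positive
off-diagonal entries is strongly connected. -/
def IsIrreducibleGen (L : Matrix V V ℝ) : Prop :=
  ∀ x y : V, Relation.ReflTransGen (fun a b => a ≠ b ∧ 0 < L a b) x y

/-- Transitivity: for any two states there is a bijection of the state space carrying one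
to the other and preserving the generator. -/
def IsTransitiveGen (L : Matrix V V ℝ) : Prop :=
  ∀ x y : V, ∃ φ : Equiv.Perm V, φ x = y ∧ ∀ a b, L a b = L (φ a) (φ b)

/-- Dirichlet form with respect to the uniform distribution:
`E(f,f) = (1/(2n)) ∑_{u,v} L(u,v)(f(u)−f(v))²`. -/
noncomputable def dirichletUnif (L : Matrix V V ℝ) (f : V → ℝ) : ℝ :=
  (1 / (2 * (Fintype.card V : ℝ))) * ∑ u, ∑ v, L u v * (f u - f v) ^ 2

/-- The `L²` mixing time of the continuous-time chain with generator `L` and uniform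
stationary distribution. -/
noncomputable def l2MixCT (L : Matrix V V ℝ) : ℝ :=
  sInf {t : ℝ | 0 ≤ t ∧ ∀ x : V,
    Real.sqrt ((Fintype.card V : ℝ) *
      ∑ y, ((NormedSpace.exp (t • L)) x y - 1 / (Fintype.card V : ℝ)) ^ 2) ≤ 1 / 2}

/-! For a symmetric generator with zero row sums, `P_t = exp (t • L)` is symmetric and
stochastic, so `n ∑_y (P_t(x,y) - 1/n)² = n P_{2t}(x,x) - 1`; transitivity makes the diagonal of
`P_{2t}` constant, so this is `tr P_{2t} - 1`, whatever `x` is. Since `E(f,f) = -(1/n) ⟨f, L f⟩`,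
the comparison of Dirichlet forms says `(2t/c) • L' ≤ 2t • L` in the Loewner order, and `tr ∘ exp`
is monotone for that order: after a shift by a multiple of the identity both matrices are positive
semidefinite, and for `0 ≤ P ≤ Q` each `tr P^k ≤ tr Q^k`, because along `X r = P + r (Q - P)` the
derivative `k tr (X r ^ (k-1) (Q - P))` is a trace of a product of positive semidefinite matrices.
So the `L²` distance of `L'` at time `t/c` is at most that of `L` at time `t`, and symmetrically. -/

open NormedSpace Matrix

theorem mul_sInf_le_sInf_of_div_mem {S T : Set ℝ} {c : ℝ} (hc : 0 < c) (hS : ∀ t ∈ S, 0 ≤ t)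
    (hST : ∀ t ∈ S, t / c ∈ T) (hTS : ∀ t ∈ T, t / c ∈ S) : c * sInf S ≤ sInf T := by
  rcases T.eq_empty_or_nonempty with rfl | hT
  · rw [Set.eq_empty_of_forall_notMem fun t ht => hST t ht, Real.sInf_empty, mul_zero]
  · exact le_csInf hT fun t ht => (le_div_iff₀' hc).mp (csInf_le ⟨0, hS⟩ (hTS t ht))

section LinftyOpNorm

-- Any norm inducing the product topology would do; it only gives access to the Banach algebra
-- facts about `exp`.
attribute [local instance] Matrix.linftyOpNormedRing Matrix.linftyOpNormedAlgebra

open scoped MatrixOrder in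
theorem Matrix.PosSemidef.trace_mul_nonneg {P D : Matrix V V ℝ} (hP : P.PosSemidef)
    (hD : D.PosSemidef) : 0 ≤ (P * D).trace := by
  have hS : (CFC.sqrt P)ᴴ = CFC.sqrt P :=
    (nonneg_iff_posSemidef.mp (CFC.sqrt_nonneg P)).isHermitian.eq
  rw [← CFC.sqrt_mul_sqrt_self P hP.nonneg, mul_assoc, trace_mul_comm, mul_assoc, ← mul_assoc]
  nth_rw 1 [← hS]
  exact (hD.conjTranspose_mul_mul_same _).trace_nonneg

theorem hasDerivAt_trace_pow_add_smul (P D : Matrix V V ℝ) (k : ℕ) (r : ℝ) :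
    HasDerivAt (fun r : ℝ => ((P + r • D) ^ k).trace)
      (k * ((P + r • D) ^ (k - 1) * D).trace) r := by
  have hline : HasDerivAt (fun r : ℝ => P + r • D) D r := by
    have := ((hasDerivAt_id r).smul_const D).const_add P
    simp only [id, one_smul] at this
    exact this
  have hpow := (traceLinearMap V ℝ ℝ).toContinuousLinearMap.hasFDerivAt.comp_hasDerivAt r
    (hline.fun_pow' k)
  have hcycle : ∀ i ∈ range k,
      ((P + r • D) ^ (k.pred - i) * D * (P + r • D) ^ i).trace = ((P + r • D) ^ (k - 1) * D).trace :=
    fun i hi => by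
      rw [trace_mul_cycle, ← pow_add, Nat.pred_eq_sub_one,
        Nat.add_sub_of_le (Nat.le_sub_one_of_lt (mem_range.mp hi))]
  have hval : (traceLinearMap V ℝ ℝ).toContinuousLinearMap
      (∑ i ∈ range k, (P + r • D) ^ (k.pred - i) * D * (P + r • D) ^ i) =
      k * ((P + r • D) ^ (k - 1) * D).trace := by
    change trace _ = _
    rw [trace_sum, sum_congr rfl hcycle, sum_const, card_range, nsmul_eq_mul]
  exact hpow.congr_deriv hval

theorem trace_pow_le_trace_pow {P Q : Matrix V V ℝ} (hP : P.PosSemidef)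
    (hPQ : (Q - P).PosSemidef) (k : ℕ) : (P ^ k).trace ≤ (Q ^ k).trace := by
  have hpath : ∀ r : ℝ, 0 ≤ r → (P + r • (Q - P)).PosSemidef :=
    fun r hr => hP.add (hPQ.smul hr)
  have hmono : MonotoneOn (fun r : ℝ => ((P + r • (Q - P)) ^ k).trace) (Set.Ici 0) := by
    refine monotoneOn_of_deriv_nonneg (convex_Ici 0)
      (fun r _ => (hasDerivAt_trace_pow_add_smul P _ k r).continuousAt.continuousWithinAt)
      (fun r _ => (hasDerivAt_trace_pow_add_smul P _ k r).differentiableAt.differentiableWithinAt)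
      fun r hr => ?_
    rw [interior_Ici] at hr
    rw [(hasDerivAt_trace_pow_add_smul P _ k r).deriv]
    exact mul_nonneg k.cast_nonneg (((hpath r hr.le).pow (k - 1)).trace_mul_nonneg hPQ)
  simpa using hmono (Set.self_mem_Ici) (zero_le_one' ℝ) zero_le_one

theorem hasSum_trace_exp (M : Matrix V V ℝ) :
    HasSum (fun k => (k.factorial : ℝ)⁻¹ * (M ^ k).trace) (exp M).trace := by
  have := (exp_series_hasSum_exp' (𝕂 := ℝ) M).mapL (traceLinearMap V ℝ ℝ).toContinuousLinearMap
  simp only [LinearMap.coe_toContinuousLinearMap', traceLinearMap_apply, trace_smul,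
    smul_eq_mul] at this
  exact this

theorem trace_exp_le_trace_exp_of_posSemidef {P Q : Matrix V V ℝ} (hP : P.PosSemidef)
    (hPQ : (Q - P).PosSemidef) : (exp P).trace ≤ (exp Q).trace :=
  hasSum_le (fun k => mul_le_mul_of_nonneg_left (trace_pow_le_trace_pow hP hPQ k) (by positivity))
    (hasSum_trace_exp P) (hasSum_trace_exp Q)

theorem Matrix.IsHermitian.posSemidef_add_smul_one {A : Matrix V V ℝ} (hA : A.IsHermitian) :
    (A + (∑ i, ∑ j, |A i j|) • 1).PosSemidef := by
  refine PosSemidef.of_dotProduct_mulVec_nonneg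
    (isHermitian_iff_isSymm.mpr ((isHermitian_iff_isSymm.mp hA).add (isSymm_one.smul _)))
    fun x => ?_
  have hprod : ∀ i j, |x i * x j| ≤ x ⬝ᵥ x := fun i j => by
    have hle : ∀ k, x k * x k ≤ x ⬝ᵥ x := fun k =>
      single_le_sum (f := fun k => x k * x k) (fun k _ => mul_self_nonneg (x k)) (mem_univ k)
    rw [abs_mul]
    nlinarith [hle i, hle j, abs_mul_abs_self (x i), abs_mul_abs_self (x j),
      sq_nonneg (|x i| - |x j|)]
  have hquad : x ⬝ᵥ (A *ᵥ x) = ∑ i, ∑ j, A i j * (x i * x j) := by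
    simp only [dotProduct, mulVec, mul_sum]
    exact sum_congr rfl fun i _ => sum_congr rfl fun j _ => by ring
  have hlower : -((∑ i, ∑ j, |A i j|) * (x ⬝ᵥ x)) ≤ x ⬝ᵥ (A *ᵥ x) := by
    rw [hquad, sum_mul, ← sum_neg_distrib]
    refine sum_le_sum fun i _ => ?_
    rw [sum_mul, ← sum_neg_distrib]
    refine sum_le_sum fun j _ => ?_
    have := mul_le_mul_of_nonneg_left (hprod i j) (abs_nonneg (A i j))
    rw [← abs_mul] at this
    linarith [neg_abs_le (A i j * (x i * x j))]
  simp only [star_trivial, add_mulVec, smul_mulVec, one_mulVec, dotProduct_add, dotProduct_smul,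
    smul_eq_mul]
  linarith

theorem trace_exp_add_smul_one (A : Matrix V V ℝ) (m : ℝ) :
    (exp (A + m • 1)).trace = Real.exp m * (exp A).trace := by
  have hscalar : exp (m • 1 : Matrix V V ℝ) = Real.exp m • 1 := by
    rw [← Algebra.algebraMap_eq_smul_one, ← Algebra.algebraMap_eq_smul_one, Real.exp_eq_exp_ℝ]
    exact (algebraMap_exp_comm m).symm
  rw [exp_add_of_commute A _ ((Commute.one_right A).smul_right m), hscalar, mul_smul_comm, mul_one,
    trace_smul, smul_eq_mul]

theorem trace_exp_le_trace_exp {A B : Matrix V V ℝ} (hA : A.IsHermitian)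
    (hAB : (B - A).PosSemidef) : (exp A).trace ≤ (exp B).trace := by
  set m := ∑ i, ∑ j, |A i j|
  have hshift := trace_exp_le_trace_exp_of_posSemidef hA.posSemidef_add_smul_one
    (Q := B + m • 1) (by rwa [add_sub_add_right_eq_sub])
  rw [trace_exp_add_smul_one, trace_exp_add_smul_one] at hshift
  exact le_of_mul_le_mul_left hshift (Real.exp_pos m)

theorem exp_mulVec_eq_self {M : Matrix V V ℝ} {v : V → ℝ} (hv : M *ᵥ v = 0) :
    exp M *ᵥ v = v := by
  let T : Matrix V V ℝ →L[ℝ] V → ℝ :=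
    ((LinearMap.applyₗ v).comp (toLin' (R := ℝ) (n := V) (m := V)).toLinearMap).toContinuousLinearMap
  have hT : ∀ A, T A = A *ᵥ v := fun A => toLin'_apply A v
  have hterm : ∀ k, k ≠ 0 → T ((k.factorial : ℝ)⁻¹ • M ^ k) = 0 := by
    intro k hk
    obtain ⟨j, rfl⟩ := Nat.exists_eq_succ_of_ne_zero hk
    rw [hT, smul_mulVec, pow_succ, ← mulVec_mulVec, hv, mulVec_zero, smul_zero]
  have hsum := (exp_series_hasSum_exp' (𝕂 := ℝ) M).mapL T
  calc exp M *ᵥ v = T (exp M) := (hT _).symm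
    _ = T (((0 : ℕ).factorial : ℝ)⁻¹ • M ^ 0) := hsum.unique (hasSum_single 0 hterm)
    _ = v := by simp [hT]

theorem exp_submatrix_eq_self {L : Matrix V V ℝ} (φ : Equiv.Perm V) (hφ : L.submatrix φ φ = L) :
    (exp L).submatrix φ φ = exp L := by
  let ψ := reindexAlgEquiv ℝ ℝ φ.symm
  have hψ : ∀ M : Matrix V V ℝ, ψ M = M.submatrix φ φ := fun M => rfl
  calc (exp L).submatrix φ φ = ψ (exp L) := rfl
    _ = exp (ψ L) := map_exp ψ ψ.toLinearMap.continuous_of_finiteDimensional L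
    _ = exp L := by rw [hψ, hφ]

end LinftyOpNorm

theorem sum_exp_apply_eq_one {L : Matrix V V ℝ} (hrow : ∀ x, ∑ y, L x y = 0) (x : V) :
    ∑ y, exp L x y = 1 := by
  have hone : L *ᵥ (fun _ => 1) = 0 := funext fun z => by simp [mulVec, dotProduct, hrow z]
  simpa [mulVec, dotProduct] using congr_fun (exp_mulVec_eq_self hone) x

theorem IsTransitiveGen.exp_smul_apply_self {L : Matrix V V ℝ} (htrans : IsTransitiveGen L)
    (t : ℝ) (x y : V) : exp (t • L) x x = exp (t • L) y y := by
  obtain ⟨φ, hφx, hφL⟩ := htrans x y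
  have := congr_fun₂ (exp_submatrix_eq_self φ (L := t • L) (by ext a b; simp [hφL a b])) x x
  rwa [submatrix_apply, hφx, eq_comm] at this

theorem IsTransitiveGen.trace_exp_smul {L : Matrix V V ℝ} (htrans : IsTransitiveGen L) (t : ℝ)
    (x : V) : (exp (t • L)).trace = Fintype.card V * exp (t • L) x x := by
  simp only [trace, Matrix.diag, htrans.exp_smul_apply_self t _ x, sum_const, card_univ,
    nsmul_eq_mul]

omit [DecidableEq V] in
theorem card_mul_sum_sq_sub_inv_card {M : Matrix V V ℝ} (hM : M.IsSymm) {x : V}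
    (hx : ∑ y, M x y = 1) :
    (Fintype.card V : ℝ) * ∑ y, (M x y - 1 / (Fintype.card V : ℝ)) ^ 2 =
      Fintype.card V * (M * M) x x - 1 := by
  have hn : (Fintype.card V : ℝ) ≠ 0 := Nat.cast_ne_zero.mpr (Fintype.card_pos_iff.mpr ⟨x⟩).ne'
  have hsq : (M * M) x x = ∑ y, M x y ^ 2 := by
    simp only [mul_apply, hM.apply x, sq]
  simp only [sub_sq, sum_add_distrib, sum_sub_distrib, ← sum_mul, ← mul_sum, hx, hsq, sum_const,
    card_univ, nsmul_eq_mul]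
  field_simp
  ring

theorem exp_smul_mul_self (L : Matrix V V ℝ) (t : ℝ) :
    exp (t • L) * exp (t • L) = exp ((2 * t) • L) := by
  rw [← exp_add_of_commute _ _ (Commute.refl _), ← add_smul, two_mul]

noncomputable def l2Dist (L : Matrix V V ℝ) (t : ℝ) (x : V) : ℝ :=
  Real.sqrt ((Fintype.card V : ℝ) *
    ∑ y, ((exp (t • L)) x y - 1 / (Fintype.card V : ℝ)) ^ 2)

def l2MixSet (L : Matrix V V ℝ) : Set ℝ :=
  {t | 0 ≤ t ∧ ∀ x, l2Dist L t x ≤ 1 / 2}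

theorem l2Dist_eq_sqrt_trace {L : Matrix V V ℝ} (hsymm : L.IsSymm) (hrow : ∀ x, ∑ y, L x y = 0)
    (htrans : IsTransitiveGen L) (t : ℝ) (x : V) :
    l2Dist L t x = Real.sqrt ((exp ((2 * t) • L)).trace - 1) := by
  have hP : (exp (t • L)).IsSymm := by
    rw [IsSymm, ← exp_transpose, transpose_smul, hsymm]
  have hstoch : ∑ y, exp (t • L) x y = 1 :=
    sum_exp_apply_eq_one (fun z => by simp [← mul_sum, hrow z]) x
  rw [l2Dist, card_mul_sum_sq_sub_inv_card hP hstoch, exp_smul_mul_self,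
    htrans.trace_exp_smul _ x]

omit [DecidableEq V] in
theorem sum_mul_sub_sq_eq_neg_two_mul_dotProduct {L : Matrix V V ℝ} (hsymm : L.IsSymm) (hrow : ∀ x, ∑ y, L x y = 0)
    (f : V → ℝ) : ∑ u, ∑ v, L u v * (f u - f v) ^ 2 = -2 * (f ⬝ᵥ (L *ᵥ f)) := by
  have hcol : ∀ v, ∑ u, L u v = 0 := fun v => by simpa only [hsymm.apply] using hrow v
  have hexpand : ∀ u v, L u v * (f u - f v) ^ 2 =
      f u ^ 2 * L u v + f v ^ 2 * L u v - 2 * (f u * (L u v * f v)) := fun u v => by ring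
  simp only [hexpand, sum_add_distrib, sum_sub_distrib, ← mul_sum, hrow, mul_zero, zero_add]
  rw [sum_comm]
  simp only [← mul_sum, hcol, mul_zero, sum_const_zero, zero_sub, dotProduct, mulVec]
  ring

omit [DecidableEq V] in
theorem dotProduct_mulVec_eq_neg_card_mul_dirichletUnif {L : Matrix V V ℝ} (hsymm : L.IsSymm)
    (hrow : ∀ x, ∑ y, L x y = 0) (f : V → ℝ) :
    f ⬝ᵥ (L *ᵥ f) = -(Fintype.card V * dirichletUnif L f) := by
  rcases isEmpty_or_nonempty V with hV | hV
  · simp [dotProduct]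
  · have hn : (Fintype.card V : ℝ) ≠ 0 := Nat.cast_ne_zero.mpr Fintype.card_ne_zero
    rw [dirichletUnif, sum_mul_sub_sq_eq_neg_two_mul_dotProduct hsymm hrow]
    field_simp

theorem trace_exp_smul_le_of_dirichletUnif_le {L L' : Matrix V V ℝ} (hsymm : L.IsSymm)
    (hrow : ∀ x, ∑ y, L x y = 0) (hsymm' : L'.IsSymm) (hrow' : ∀ x, ∑ y, L' x y = 0) {s t : ℝ}
    (h : ∀ f, t * dirichletUnif L f ≤ s * dirichletUnif L' f) :
    (exp (s • L')).trace ≤ (exp (t • L)).trace := by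
  refine trace_exp_le_trace_exp (isHermitian_iff_isSymm.mpr (hsymm'.smul s))
    (PosSemidef.of_dotProduct_mulVec_nonneg
      (isHermitian_iff_isSymm.mpr ((hsymm.smul t).sub (hsymm'.smul s))) fun f => ?_)
  simp only [star_trivial, sub_mulVec, smul_mulVec, dotProduct_sub, dotProduct_smul, smul_eq_mul,
    dotProduct_mulVec_eq_neg_card_mul_dirichletUnif hsymm hrow,
    dotProduct_mulVec_eq_neg_card_mul_dirichletUnif hsymm' hrow']
  nlinarith [h f, (Fintype.card V).cast_nonneg (α := ℝ)]

theorem l2Dist_le_of_dirichletUnif_le {L L' : Matrix V V ℝ} (hsymm : L.IsSymm)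
    (hrow : ∀ x, ∑ y, L x y = 0) (htrans : IsTransitiveGen L) (hsymm' : L'.IsSymm)
    (hrow' : ∀ x, ∑ y, L' x y = 0) (htrans' : IsTransitiveGen L') {c : ℝ}
    (hE : ∀ f, dirichletUnif L f ≤ dirichletUnif L' f / c) {t : ℝ} (ht : 0 ≤ t) (x y : V) :
    l2Dist L' (t / c) x ≤ l2Dist L t y := by
  rw [l2Dist_eq_sqrt_trace hsymm' hrow' htrans', l2Dist_eq_sqrt_trace hsymm hrow htrans]
  refine Real.sqrt_le_sqrt (sub_le_sub_right ?_ 1)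
  refine trace_exp_smul_le_of_dirichletUnif_le hsymm hrow hsymm' hrow' fun f => ?_
  calc 2 * t * dirichletUnif L f ≤ 2 * t * (dirichletUnif L' f / c) :=
        mul_le_mul_of_nonneg_left (hE f) (by positivity)
    _ = 2 * (t / c) * dirichletUnif L' f := by ring

theorem div_mem_l2MixSet_of_dirichletUnif_le {L L' : Matrix V V ℝ} (hsymm : L.IsSymm)
    (hrow : ∀ x, ∑ y, L x y = 0) (htrans : IsTransitiveGen L) (hsymm' : L'.IsSymm)
    (hrow' : ∀ x, ∑ y, L' x y = 0) (htrans' : IsTransitiveGen L') {c : ℝ} (hc : 0 ≤ c)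
    (hE : ∀ f, dirichletUnif L f ≤ dirichletUnif L' f / c) {t : ℝ} (ht : t ∈ l2MixSet L) :
    t / c ∈ l2MixSet L' :=
  ⟨div_nonneg ht.1 hc, fun x => (l2Dist_le_of_dirichletUnif_le hsymm hrow htrans hsymm' hrow'
    htrans' hE ht.1 x x).trans (ht.2 x)⟩

theorem transitive_l2_mixing_robust_general (L L' : Matrix V V ℝ) (c : ℝ)
    (hsymm : L.IsSymm) (hsymm' : L'.IsSymm)
    (hgen : IsGenerator L) (hgen' : IsGenerator L')
    (htrans : IsTransitiveGen L) (htrans' : IsTransitiveGen L')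
    (hc0 : 0 < c)
    (hEcomp : ∀ f : V → ℝ,
      c * dirichletUnif L' f ≤ dirichletUnif L f ∧
      dirichletUnif L f ≤ dirichletUnif L' f / c) :
    c * l2MixCT L ≤ l2MixCT L' ∧ l2MixCT L' ≤ l2MixCT L / c := by
  have hfwd : ∀ t ∈ l2MixSet L, t / c ∈ l2MixSet L' := fun t =>
    div_mem_l2MixSet_of_dirichletUnif_le hsymm hgen.2 htrans hsymm' hgen'.2 htrans' hc0.le
      fun f => (hEcomp f).2
  have hbwd : ∀ t ∈ l2MixSet L', t / c ∈ l2MixSet L := fun t =>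
    div_mem_l2MixSet_of_dirichletUnif_le hsymm' hgen'.2 htrans' hsymm hgen.2 htrans hc0.le
      fun f => (le_div_iff₀' hc0).mpr (hEcomp f).1
  have hnonneg : ∀ L : Matrix V V ℝ, ∀ t ∈ l2MixSet L, 0 ≤ t := fun _ _ ht => ht.1
  exact ⟨mul_sInf_le_sInf_of_div_mem hc0 (hnonneg L) hfwd hbwd,
    (le_div_iff₀' hc0).mpr (mul_sInf_le_sInf_of_div_mem hc0 (hnonneg L') hbwd hfwd)⟩

/-- For transitive reversible chains, the `L²` mixing time is robust under bounded
perturbations of the Dirichlet form which preserve transitivity. -/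
theorem transitive_l2_mixing_robust (L L' : Matrix V V ℝ) (c : ℝ)
    (hcard : 2 ≤ Fintype.card V)
    (hsymm : L.IsSymm) (hsymm' : L'.IsSymm)
    (hgen : IsGenerator L) (hgen' : IsGenerator L')
    (hirr : IsIrreducibleGen L) (hirr' : IsIrreducibleGen L')
    (htrans : IsTransitiveGen L) (htrans' : IsTransitiveGen L')
    (hc0 : 0 < c) (hc1 : c ≤ 1)
    (hEcomp : ∀ f : V → ℝ,
      c * dirichletUnif L' f ≤ dirichletUnif L f ∧
      dirichletUnif L f ≤ dirichletUnif L' f / c) :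
    c * l2MixCT L ≤ l2MixCT L' ∧ l2MixCT L' ≤ l2MixCT L / c :=
  transitive_l2_mixing_robust_general L L' c hsymm hsymm' hgen hgen' htrans htrans' hc0 hEcomp
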